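/- Let μ and Σ be maps assigning to every probability distribution P on ℝ^q a vector μ(P) ∈ ℝ^q and a symmetric positive semidefinite q×q matrix Σ(P), which are affine equivariant in the sense that μ(P^{a,B}) = a + B·μ(P) and Σ(P^{a,B}) = B·Σ(P)·Bᵀ for every probability distribution P, every a ∈ ℝ^q and every invertible B ∈ ℝ^{q×q}, where P^{a,B} denotes the law of a + BX for X ∼ P. If P is elliptically symmetric with center μ₀ ∈ ℝ^q and scatter matrix Σ₀ ∈ ℝ^{q×q} (symmetric positive definite), then μ(P) = μ₀ and Σ(P) = c·Σ₀ for some real number c ≥ 0. -/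

import Mathlib

open MeasureTheory Matrix

/-- The law `P^{a,B}` of `a + B·X` when `X ∼ P`. -/
noncomputable def mapAff {q : ℕ} (P : Measure (Fin q → ℝ)) (a : Fin q → ℝ)
    (B : Matrix (Fin q) (Fin q) ℝ) : Measure (Fin q → ℝ) :=
  P.map fun x => a + B.mulVec x

/-- `P` is spherically symmetric around `0`: the law of `U·X` equals the law of `X`
for every orthogonal matrix `U`. -/
def SphericallySymmetric {q : ℕ} (P : Measure (Fin q → ℝ)) : Prop :=
  ∀ U : Matrix (Fin q) (Fin q) ℝ, Uᵀ * U = 1 → P.map (fun x => U.mulVec x) = P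

/-- `P` is elliptically symmetric with center `μ₀` and (positive definite) scatter matrix
`S0`: the law of `S0^{-1/2}·(X - μ₀)` is spherically symmetric. -/
def EllipticallySymmetric {q : ℕ} (P : Measure (Fin q → ℝ)) (μ₀ : Fin q → ℝ)
    {S0 : Matrix (Fin q) (Fin q) ℝ} (hS0 : S0.PosDef) : Prop :=
  SphericallySymmetric (P.map fun x => (hS0.posSemidef.1.eigenvectorUnitary.1 *
    diagonal (fun i => Real.sqrt (hS0.posSemidef.1.eigenvalues i)) *
    (star hS0.posSemidef.1.eigenvectorUnitary : Matrix (Fin q) (Fin q) ℝ))⁻¹.mulVec (x - μ₀))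

lemma measurable_aff {q : ℕ} (a : Fin q → ℝ) (B : Matrix (Fin q) (Fin q) ℝ) :
    Measurable fun x : Fin q → ℝ => a + B.mulVec x := by
  have h : Continuous fun x : Fin q → ℝ => B.mulVec x :=
    B.mulVecLin.continuous_of_finiteDimensional
  exact (continuous_const.add h).measurable

lemma mapAff_mapAff {q : ℕ} (P : Measure (Fin q → ℝ)) (a a' : Fin q → ℝ)
    (B B' : Matrix (Fin q) (Fin q) ℝ) :
    mapAff (mapAff P a B) a' B' = mapAff P (a' + B'.mulVec a) (B' * B) := by
  unfold mapAff
  rw [Measure.map_map (measurable_aff a' B') (measurable_aff a B)]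
  congr 1
  funext x
  simp [Function.comp, Matrix.mulVec_add, Matrix.mulVec_mulVec, add_assoc]

lemma mapAff_zero_one {q : ℕ} (P : Measure (Fin q → ℝ)) :
    mapAff P 0 (1 : Matrix (Fin q) (Fin q) ℝ) = P := by
  unfold mapAff
  have : (fun x : Fin q → ℝ => 0 + (1 : Matrix (Fin q) (Fin q) ℝ).mulVec x) = id := by
    funext x; simp [Matrix.one_mulVec]
  rw [this, Measure.map_id]

/-- Affine equivariant location and scatter functionals applied to an elliptically
symmetric distribution with center `μ₀` and scatter matrix `S0` yield `μ₀` and a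
nonnegative multiple of `S0`, respectively. -/
theorem stmt1 (q : ℕ) (hq : 1 ≤ q)
    (μfun : Measure (Fin q → ℝ) → (Fin q → ℝ))
    (Sfun : Measure (Fin q → ℝ) → Matrix (Fin q) (Fin q) ℝ)
    (hpsd : ∀ P : Measure (Fin q → ℝ), IsProbabilityMeasure P → (Sfun P).PosSemidef)
    (hequiv : ∀ P : Measure (Fin q → ℝ), IsProbabilityMeasure P →
      ∀ (a : Fin q → ℝ) (B : Matrix (Fin q) (Fin q) ℝ), IsUnit B.det →
        μfun (mapAff P a B) = a + B.mulVec (μfun P) ∧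
        Sfun (mapAff P a B) = B * Sfun P * Bᵀ)
    (P : Measure (Fin q → ℝ)) [IsProbabilityMeasure P]
    (μ₀ : Fin q → ℝ) (S0 : Matrix (Fin q) (Fin q) ℝ) (hS0 : S0.PosDef)
    (hell : EllipticallySymmetric P μ₀ hS0) :
    μfun P = μ₀ ∧ ∃ c : ℝ, 0 ≤ c ∧ Sfun P = c • S0 := by
  classical
  set A : Matrix (Fin q) (Fin q) ℝ := hS0.posSemidef.1.eigenvectorUnitary.1 *
    diagonal (fun i => Real.sqrt (hS0.posSemidef.1.eigenvalues i)) *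
    (star hS0.posSemidef.1.eigenvectorUnitary : Matrix (Fin q) (Fin q) ℝ) with hAdef
  have hAsymm : Aᵀ = A := by
    simp [hAdef, Matrix.transpose_mul, Matrix.mul_assoc, Matrix.star_eq_conjTranspose,
      Matrix.conjTranspose_eq_transpose_of_trivial]
  have hAA : A * A = S0 := by
    have hU : (star hS0.posSemidef.1.eigenvectorUnitary : Matrix (Fin q) (Fin q) ℝ) *
        hS0.posSemidef.1.eigenvectorUnitary.1 = 1 :=
      Unitary.star_mul_self_of_mem hS0.posSemidef.1.eigenvectorUnitary.2
    have hD : diagonal (fun i => Real.sqrt (hS0.posSemidef.1.eigenvalues i)) *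
        diagonal (fun i => Real.sqrt (hS0.posSemidef.1.eigenvalues i)) =
        diagonal (RCLike.ofReal ∘ hS0.posSemidef.1.eigenvalues) := by
      rw [diagonal_mul_diagonal]
      congr 1; funext i
      simp [Real.mul_self_sqrt (hS0.posSemidef.eigenvalues_nonneg i)]
    conv_rhs => rw [hS0.posSemidef.1.spectral_theorem]
    rw [hAdef, Unitary.conjStarAlgAut_apply, ← hD]
    simp only [Matrix.mul_assoc]
    rw [← Matrix.mul_assoc _ _ (diagonal _ * _), hU, Matrix.one_mul]
  have hdetA : IsUnit A.det := by
    have h : A.det * A.det = S0.det := by rw [← Matrix.det_mul, hAA]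
    have h0 : S0.det ≠ 0 := ne_of_gt hS0.det_pos
    refine isUnit_iff_ne_zero.mpr fun hz => h0 ?_
    rw [← h, hz, mul_zero]
  have hAinv : A * A⁻¹ = 1 := Matrix.mul_nonsing_inv A hdetA
  have hdetAinv : IsUnit A⁻¹.det := by
    have : A.det * A⁻¹.det = 1 := by rw [← Matrix.det_mul, hAinv, Matrix.det_one]
    exact IsUnit.of_mul_eq_one _ ((mul_comm _ _).trans this)
  have hfun : (fun x : Fin q → ℝ => A⁻¹.mulVec (x - μ₀)) =
      fun x => (-(A⁻¹.mulVec μ₀)) + A⁻¹.mulVec x := by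
    funext x
    rw [Matrix.mulVec_sub]
    abel
  have hsph : SphericallySymmetric (P.map fun x => A⁻¹.mulVec (x - μ₀)) := hell
  set P₀ : Measure (Fin q → ℝ) := P.map (fun x => A⁻¹.mulVec (x - μ₀)) with hP₀
  have hP₀eq : P₀ = mapAff P (-(A⁻¹.mulVec μ₀)) A⁻¹ := by
    rw [hP₀, hfun]; rfl
  have hprob : IsProbabilityMeasure P₀ := by
    rw [hP₀, hfun]
    exact Measure.isProbabilityMeasure_map (measurable_aff _ _).aemeasurable
  have hPback : mapAff P₀ μ₀ A = P := by
    rw [hP₀eq, mapAff_mapAff]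
    have h1 : μ₀ + A.mulVec (-(A⁻¹.mulVec μ₀)) = 0 := by
      rw [Matrix.mulVec_neg, Matrix.mulVec_mulVec, hAinv, Matrix.one_mulVec]
      abel
    rw [h1, hAinv, mapAff_zero_one]
  -- consequences of spherical symmetry
  have hkey : ∀ U : Matrix (Fin q) (Fin q) ℝ, Uᵀ * U = 1 →
      μfun P₀ = U.mulVec (μfun P₀) ∧ Sfun P₀ = U * Sfun P₀ * Uᵀ := by
    intro U hU
    have hdetU : IsUnit U.det := by
      have h : Uᵀ.det * U.det = 1 := by rw [← Matrix.det_mul, hU, Matrix.det_one]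
      rw [Matrix.det_transpose] at h
      exact IsUnit.of_mul_eq_one _ h
    have hmap : mapAff P₀ 0 U = P₀ := by
      have h := hsph U hU
      unfold mapAff
      rw [← h]
      congr 1
      funext x
      rw [zero_add]
    have h2 := hequiv P₀ hprob 0 U hdetU
    rw [hmap] at h2
    refine ⟨?_, h2.2⟩
    have := h2.1
    rwa [zero_add] at this
  -- location is zero
  have hμ0 : μfun P₀ = 0 := by
    have hOrth : (-1 : Matrix (Fin q) (Fin q) ℝ)ᵀ * (-1) = 1 := by
      simp
    have h := (hkey (-1) hOrth).1
    have h2 : μfun P₀ = -(μfun P₀) := by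
      simpa [Matrix.neg_mulVec, Matrix.one_mulVec] using h
    funext i
    have := congrFun h2 i
    simp only [Pi.neg_apply] at this
    have : μfun P₀ i = 0 := by linarith
    simpa using this
  -- scatter is scalar
  set S : Matrix (Fin q) (Fin q) ℝ := Sfun P₀ with hSdef
  have hoff : ∀ i k : Fin q, i ≠ k → S i k = 0 := by
    intro i k hik
    set d : Fin q → ℝ := fun j => if j = i then -1 else 1 with hd
    have hdsq : ∀ j, d j * d j = 1 := by
      intro j; by_cases h : j = i <;> simp [hd, h]
    have hDo : (Matrix.diagonal d)ᵀ * Matrix.diagonal d = 1 := by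
      rw [Matrix.diagonal_transpose, Matrix.diagonal_mul_diagonal]
      have : (fun j => d j * d j) = fun _ => (1 : ℝ) := funext hdsq
      rw [this, Matrix.diagonal_one]
    have h := (hkey (Matrix.diagonal d) hDo).2
    have h2 := congrFun (congrFun h i) k
    rw [Matrix.diagonal_transpose] at h2
    have hdi : d i = -1 := by simp [hd]
    have hdk : d k = 1 := by simp [hd, Ne.symm hik]
    simp only [Matrix.diagonal_mul, Matrix.mul_diagonal, hdi, hdk] at h2
    -- h2 : S i k = -1 * S i k * 1
    have : S i k = -(S i k) := by linarith [h2]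
    linarith
  have hswap : ∀ σ : Equiv.Perm (Fin q), ∀ a b : Fin q, S a b = S (σ a) (σ b) := by
    intro σ a b
    set U : Matrix (Fin q) (Fin q) ℝ := Matrix.of fun a b => if σ a = b then 1 else 0 with hUdef
    have hUo : Uᵀ * U = 1 := by
      ext a b
      simp only [hUdef, Matrix.mul_apply, Matrix.transpose_apply, Matrix.of_apply,
        Matrix.one_apply, Equiv.apply_eq_iff_eq_symm_apply, ite_mul, one_mul, zero_mul,
        Finset.sum_ite_eq', Finset.mem_univ, if_true]
      by_cases h : a = b <;> simp [h]
    have h := (hkey U hUo).2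
    have h2 := congrFun (congrFun h a) b
    have h3 : (U * S * Uᵀ) a b = S (σ a) (σ b) := by
      simp [hUdef, Matrix.mul_apply, Finset.sum_ite_eq, ite_mul, mul_ite, Finset.mul_sum]
    rw [h3] at h2
    exact h2
  have i₀ : Fin q := ⟨0, hq⟩
  set c : ℝ := S i₀ i₀ with hc
  have hS_cI : S = c • (1 : Matrix (Fin q) (Fin q) ℝ) := by
    ext a b
    by_cases hab : a = b
    · subst hab
      have h := hswap (Equiv.swap a i₀) a a
      rw [Equiv.swap_apply_left] at h
      simp [Matrix.smul_apply, Matrix.one_apply_eq, ← hc, h]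
    · simp [hoff a b hab, Matrix.one_apply_ne hab]
  have hcnn : 0 ≤ c := by
    exact (hpsd P₀ hprob).diag_nonneg
  -- assemble
  have hfin := hequiv P₀ hprob μ₀ A hdetA
  rw [hPback] at hfin
  constructor
  · rw [hfin.1, hμ0, Matrix.mulVec_zero, add_zero]
  · refine ⟨c, hcnn, ?_⟩
    rw [hfin.2, ← hSdef, hS_cI, hAsymm, Matrix.mul_smul, Matrix.mul_one,
      Matrix.smul_mul, hAA]
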